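/- Let S(t) be a C₀-semigroup on X₂ with generator A₂, b₂ ∈ X₂, c ∈ D(A₂*), and suppose (c, b₂) ≠ 0. Then for every t₁ > 0 and every w ∈ H¹([0,t₁]; ℂ) with w(0) = 0, there exists u ∈ L²([0,t₁]) such that w(t) = ∫_0^t (c, S(t-τ) b₂) u(τ) dτ for all t ∈ [0, t₁]. -/

import Mathlib

/-!
Write `k s = ⟪c, S s b₂⟫`, so that `k 0 = ⟪c, b₂⟫ ≠ 0` and, since `c ∈ D(A₂*)`,
`k' s = ⟪A₂* c, S s b₂⟫` is continuous on `[0, ∞)`. Differentiating `w = k ⋆ u` gives the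
Volterra equation of the second kind `k 0 • u + k' ⋆ u = w'`. Its solution has the form
`u = w' / k 0 + v` with `v` continuous: `v` is the fixed point of an operator on `C([0, T])`
whose `n`-th iterate is Lipschitz with constant `(M T)ⁿ / n!`, hence a contraction for large `n`.
Integrating the second-kind equation and exchanging the order of integration over the triangle
`0 ≤ τ ≤ s ≤ t` gives back `k ⋆ u = w`, and `u` is square integrable because `w'` is.
-/

open MeasureTheory Set Function Topology
open scoped Nat Interval

section VolterraIteration

variable {E : Type*} [MetricSpace E] {T M : ℝ}

def VolterraLipschitz (hT : 0 ≤ T) (M : ℝ) (Φ : C(Icc 0 T, E) → C(Icc 0 T, E)) : Prop :=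
  ∀ a b (t : Icc 0 T),
    dist (Φ a t) (Φ b t) ≤ M * ∫ τ in (0 : ℝ)..t, dist (IccExtend hT a τ) (IccExtend hT b τ)

theorem VolterraLipschitz.dist_iterate_apply_le {hT : 0 ≤ T} {Φ : C(Icc 0 T, E) → C(Icc 0 T, E)}
    (hΦ : VolterraLipschitz hT M Φ) (hM : 0 ≤ M) (a b : C(Icc 0 T, E)) (n : ℕ) (t : Icc 0 T) :
    dist ((Φ^[n] a) t) ((Φ^[n] b) t) ≤ (M * t) ^ n / n ! * dist a b := by
  induction n generalizing t with
  | zero => simpa using ContinuousMap.dist_apply_le_dist (f := a) (g := b) t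
  | succ n ih =>
    have ht : (0 : ℝ) ≤ t := t.2.1
    rw [iterate_succ_apply', iterate_succ_apply']
    calc _ ≤ M * ∫ τ in (0 : ℝ)..t, dist (IccExtend hT (Φ^[n] a) τ) (IccExtend hT (Φ^[n] b) τ) :=
          hΦ _ _ t
      _ ≤ M * ∫ τ in (0 : ℝ)..t, (M * τ) ^ n / n ! * dist a b := by
          refine mul_le_mul_of_nonneg_left (intervalIntegral.integral_mono_on ht ?_ ?_ ?_) hM
          · exact (((Φ^[n] a).continuous.Icc_extend').dist
              (Φ^[n] b).continuous.Icc_extend').intervalIntegrable _ _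
          · exact (by fun_prop : Continuous fun τ : ℝ => (M * τ) ^ n / n ! * dist a b)
              |>.intervalIntegrable _ _
          · intro τ hτ
            have hτT : τ ∈ Icc 0 T := ⟨hτ.1, hτ.2.trans t.2.2⟩
            rw [IccExtend_of_mem hT _ hτT, IccExtend_of_mem hT _ hτT]
            exact ih ⟨τ, hτT⟩
      _ = (M * t) ^ (n + 1) / (n + 1)! * dist a b := by
          simp only [mul_pow, intervalIntegral.integral_mul_const, intervalIntegral.integral_div,
            intervalIntegral.integral_const_mul, integral_pow, Nat.factorial_succ, Nat.cast_mul]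
          push_cast
          field_simp
          ring

theorem VolterraLipschitz.exists_isFixedPt [CompleteSpace E] [Nonempty E] {hT : 0 ≤ T}
    {Φ : C(Icc 0 T, E) → C(Icc 0 T, E)} (hΦ : VolterraLipschitz hT M Φ) (hM : 0 ≤ M) :
    ∃ v, IsFixedPt Φ v := by
  obtain ⟨N, hN⟩ := (FloorSemiring.tendsto_pow_div_factorial_atTop (M * T)).eventually
    (gt_mem_nhds one_pos) |>.exists
  have hK : 0 ≤ (M * T) ^ N / N ! := by positivity
  have hcontr : ContractingWith ⟨_, hK⟩ Φ^[N] := by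
    refine ⟨hN, LipschitzWith.of_dist_le_mul fun a b => ?_⟩
    refine (ContinuousMap.dist_le (by positivity)).2 fun t => ?_
    refine (hΦ.dist_iterate_apply_le hM a b N t).trans ?_
    change _ ≤ (M * T) ^ N / N ! * dist a b
    gcongr
    exacts [mul_nonneg hM t.2.1, t.2.2]
  have : Nonempty C(Icc 0 T, E) := ⟨.const _ (Classical.arbitrary E)⟩
  exact ⟨_, hcontr.isFixedPt_fixedPoint_iterate⟩

end VolterraIteration

theorem continuous_intervalIntegral_comp_sub_mul {G q : ℝ → ℂ} (hG : Continuous G)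
    (hq : Integrable q) : Continuous fun t => ∫ τ in (0 : ℝ)..t, G (t - τ) * q τ := by
  refine continuous_iff_continuousAt.2 fun t₀ => ?_
  set a := -|t₀| - 1
  set b := |t₀| + 1
  have hab : a ≤ b := by linarith [abs_nonneg t₀]
  have h0 : (0 : ℝ) ∈ Ioo a b := ⟨by linarith [abs_nonneg t₀], by linarith [abs_nonneg t₀]⟩
  have ht₀ : t₀ ∈ Ioo a b := ⟨by linarith [neg_abs_le t₀], by linarith [le_abs_self t₀]⟩
  obtain ⟨C, hC⟩ := (isCompact_Icc (a := a - b) (b := b - a)).exists_bound_of_continuousOn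
    hG.continuousOn
  have hbound : ∀ᶠ x in 𝓝 t₀, ∀ᵐ τ ∂volume.restrict (Ι a b), ‖G (x - τ) * q τ‖ ≤ C * ‖q τ‖ := by
    filter_upwards [Ioo_mem_nhds ht₀.1 ht₀.2] with x hx
    filter_upwards [ae_restrict_mem measurableSet_uIoc] with τ hτ
    rw [uIoc_of_le hab] at hτ
    rw [norm_mul]
    gcongr
    exact hC _ ⟨by linarith [hx.1, hτ.2], by linarith [hx.2, hτ.1]⟩
  have key := intervalIntegral.continuousAt_parametric_primitive_of_dominated
    (F := fun x τ => G (x - τ) * q τ) _ a b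
    (fun x => ((hG.comp (continuous_const.sub continuous_id)).aestronglyMeasurable.mul
      hq.aestronglyMeasurable.restrict)) hbound ((hq.norm.const_mul C).intervalIntegrable)
    (ae_of_all _ fun τ => by fun_prop) h0 ht₀ Real.volume_singleton
  exact key.comp (f := fun t => (t, t)) (continuousAt_id.prodMk continuousAt_id)

theorem continuousOn_intervalIntegral_comp_sub_mul {G q : ℝ → ℂ} {T : ℝ} (hG : Continuous G)
    (hq : IntervalIntegrable q volume 0 T) :
    ContinuousOn (fun t => ∫ τ in (0 : ℝ)..t, G (t - τ) * q τ) (Icc 0 T) := by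
  have hq' : Integrable ((Ι 0 T).indicator q) :=
    (integrable_indicator_iff measurableSet_uIoc).2 hq.def'
  refine (continuous_intervalIntegral_comp_sub_mul hG hq').continuousOn.congr fun t ht => ?_
  refine intervalIntegral.integral_congr_ae (ae_of_all _ fun τ hτ => ?_)
  have hsub : Ι 0 t ⊆ Ι 0 T := uIoc_subset_uIoc_of_uIcc_subset_uIcc
    (uIcc_subset_uIcc left_mem_uIcc (Icc_subset_uIcc ht))
  rw [indicator_of_mem (hsub hτ)]

theorem exists_continuous_volterra_solution {K h : ℝ → ℂ} {T : ℝ} (hT : 0 ≤ T)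
    (hK : Continuous K) (hh : IntervalIntegrable h volume 0 T) :
    ∃ v : ℝ → ℂ, Continuous v ∧
      ∀ t ∈ Icc 0 T, v t = ∫ τ in (0 : ℝ)..t, K (t - τ) * (h τ + v τ) := by
  obtain ⟨M, hM⟩ := (isCompact_Icc (a := 0) (b := T)).exists_bound_of_continuousOn hK.continuousOn
  have hM₀ : 0 ≤ M := (norm_nonneg _).trans (hM 0 ⟨le_rfl, hT⟩)
  have hext : ∀ v : C(Icc 0 T, ℂ), Continuous (IccExtend hT v) := fun v => v.continuous.Icc_extend'
  let Φ (v : C(Icc 0 T, ℂ)) : C(Icc 0 T, ℂ) :=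
    ⟨(Icc 0 T).domRestrict fun t => ∫ τ in (0 : ℝ)..t, K (t - τ) * (h τ + IccExtend hT v τ),
      (continuousOn_intervalIntegral_comp_sub_mul hK
        (hh.add ((hext v).intervalIntegrable _ _))).domRestrict⟩
  have hΦ : VolterraLipschitz hT M Φ := by
    intro a b t
    have ht : (0 : ℝ) ≤ t := t.2.1
    have hint : ∀ v : C(Icc 0 T, ℂ), IntervalIntegrable
        (fun τ => K (t - τ) * (h τ + IccExtend hT v τ)) volume 0 t := fun v =>
      ((hh.add ((hext v).intervalIntegrable _ _)).mono_set
        (uIcc_subset_uIcc left_mem_uIcc (Icc_subset_uIcc t.2))).continuousOn_mul (by fun_prop)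
    have hdiff : Φ a t - Φ b t =
        ∫ τ in (0 : ℝ)..t, K (t - τ) * (IccExtend hT a τ - IccExtend hT b τ) := by
      dsimp only [Φ, ContinuousMap.coe_mk, domRestrict_apply]
      rw [← intervalIntegral.integral_sub (hint a) (hint b)]
      congr 1 with τ
      ring
    rw [dist_eq_norm, hdiff, ← intervalIntegral.integral_const_mul]
    refine intervalIntegral.norm_integral_le_of_norm_le ht (ae_of_all _ fun τ hτ => ?_)
      (((hext a).dist (hext b)).intervalIntegrable _ _ |>.const_mul M)
    rw [norm_mul, ← dist_eq_norm]
    gcongr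
    exact hM _ ⟨by linarith [hτ.2], by linarith [hτ.1, t.2.2]⟩
  obtain ⟨v, hv⟩ := hΦ.exists_isFixedPt hM₀
  refine ⟨IccExtend hT v, hext v, fun t ht => ?_⟩
  rw [IccExtend_of_mem hT _ ht]
  exact (DFunLike.congr_fun hv ⟨t, ht⟩).symm

theorem integral_integral_swap_triangle {E : Type*} [NormedAddCommGroup E] [NormedSpace ℝ E]
    {F : ℝ → ℝ → E} {t : ℝ} (ht : 0 ≤ t)
    (hF : Integrable (uncurry F) ((volume.restrict (Ioc 0 t)).prod (volume.restrict (Ioc 0 t)))) :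
    ∫ s in (0 : ℝ)..t, ∫ τ in (0 : ℝ)..s, F s τ = ∫ τ in (0 : ℝ)..t, ∫ s in τ..t, F s τ := by
  have hL : ∀ s ∈ Ioc 0 t,
      ∫ τ in (0 : ℝ)..s, F s τ = ∫ τ in Ioc 0 t, (Iic s).indicator (F s) τ := by
    intro s hs
    rw [intervalIntegral.integral_of_le hs.1.le, setIntegral_indicator measurableSet_Iic,
      Ioc_inter_Iic, min_eq_right hs.2]
  have hR : ∀ τ ∈ Ioc 0 t,
      ∫ s in τ..t, F s τ = ∫ s in Ioc 0 t, (Ici τ).indicator (fun s => F s τ) s := by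
    intro τ hτ
    have hIcc : Ioc 0 t ∩ Ici τ = Icc τ t := by
      ext s
      exact ⟨fun hs => ⟨hs.2, hs.1.2⟩, fun hs => ⟨⟨hτ.1.trans_le hs.1, hs.2⟩, hs.1⟩⟩
    rw [intervalIntegral.integral_of_le hτ.2, ← integral_Icc_eq_integral_Ioc,
      setIntegral_indicator measurableSet_Ici, hIcc]
  rw [intervalIntegral.integral_of_le ht, intervalIntegral.integral_of_le ht,
    setIntegral_congr_fun measurableSet_Ioc hL, setIntegral_congr_fun measurableSet_Ioc hR]
  exact integral_integral_swap (hF.indicator (measurableSet_le measurable_snd measurable_fst))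

theorem integral_integral_deriv_comp_sub_mul {k k' u : ℝ → ℂ} {t : ℝ} (ht : 0 ≤ t)
    (hk : ∀ s ∈ Icc 0 t, HasDerivAt k (k' s) s) (hk' : Continuous k')
    (hu : IntervalIntegrable u volume 0 t) :
    ∫ s in (0 : ℝ)..t, ∫ τ in (0 : ℝ)..s, k' (s - τ) * u τ =
      ∫ τ in (0 : ℝ)..t, (k (t - τ) - k 0) * u τ := by
  have hu' : Integrable u (volume.restrict (Ioc 0 t)) :=
    (intervalIntegrable_iff_integrableOn_Ioc_of_le ht).1 hu
  obtain ⟨C, hC⟩ := (isCompact_Icc (a := -t) (b := t)).exists_bound_of_continuousOn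
    hk'.continuousOn
  have hint : Integrable (uncurry fun s τ => k' (s - τ) * u τ)
      ((volume.restrict (Ioc 0 t)).prod (volume.restrict (Ioc 0 t))) := by
    refine Integrable.mono' ((hu'.norm.const_mul C).comp_snd _)
      ((hk'.comp (continuous_fst.sub continuous_snd)).aestronglyMeasurable.mul
        hu'.aestronglyMeasurable.comp_snd) ?_
    rw [Measure.prod_restrict]
    filter_upwards [ae_restrict_mem (measurableSet_Ioc.prod measurableSet_Ioc)]
      with ⟨s, τ⟩ ⟨⟨hs₀, hst⟩, hτ₀, hτt⟩
    rw [uncurry_apply_pair, norm_mul]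
    gcongr
    exact hC _ ⟨by linarith, by linarith⟩
  rw [integral_integral_swap_triangle ht hint]
  refine intervalIntegral.integral_congr fun τ hτ => ?_
  rw [uIcc_of_le ht] at hτ
  have hderiv : ∀ x ∈ uIcc 0 (t - τ), HasDerivAt k (k' x) x := fun x hx => by
    rw [uIcc_of_le (by linarith [hτ.2])] at hx
    exact hk x ⟨hx.1, by linarith [hx.2, hτ.1]⟩
  rw [intervalIntegral.integral_mul_const, intervalIntegral.integral_comp_sub_right, sub_self,
    intervalIntegral.integral_eq_sub_of_hasDerivAt hderiv (hk'.intervalIntegrable _ _)]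

theorem integral_comp_sub_mul_eq_of_volterra {k k' u f : ℝ → ℂ} {T t : ℝ}
    (hk : ∀ s ∈ Icc 0 T, HasDerivAt k (k' s) s) (hk' : Continuous k')
    (hu : IntervalIntegrable u volume 0 T)
    (hvolterra : ∀ s ∈ Icc 0 T, k 0 * u s + ∫ τ in (0 : ℝ)..s, k' (s - τ) * u τ = f s)
    (ht : t ∈ Icc 0 T) :
    ∫ τ in (0 : ℝ)..t, k (t - τ) * u τ = ∫ s in (0 : ℝ)..t, f s := by
  have hut : IntervalIntegrable u volume 0 t :=
    hu.mono_set (uIcc_subset_uIcc left_mem_uIcc (Icc_subset_uIcc ht))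
  have hkt : ∀ s ∈ Icc 0 t, HasDerivAt k (k' s) s := fun s hs => hk s ⟨hs.1, hs.2.trans ht.2⟩
  have hkcont : ContinuousOn (fun τ => k (t - τ) - k 0) (uIcc 0 t) := by
    rw [uIcc_of_le ht.1]
    refine ContinuousOn.sub (fun τ hτ => ?_) continuousOn_const
    have hτ' : t - τ ∈ Icc 0 t := ⟨by linarith [hτ.2], by linarith [hτ.1]⟩
    exact ((hkt _ hτ').continuousAt.comp (by fun_prop)).continuousWithinAt
  have hconv : IntervalIntegrable (fun s => ∫ τ in (0 : ℝ)..s, k' (s - τ) * u τ) volume 0 t := by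
    refine ContinuousOn.intervalIntegrable ?_
    rw [uIcc_of_le ht.1]
    exact continuousOn_intervalIntegral_comp_sub_mul hk' hut
  calc ∫ τ in (0 : ℝ)..t, k (t - τ) * u τ
      = ∫ τ in (0 : ℝ)..t, (k 0 * u τ + (k (t - τ) - k 0) * u τ) := by
        congr 1 with τ
        ring
    _ = (∫ τ in (0 : ℝ)..t, k 0 * u τ) +
          ∫ s in (0 : ℝ)..t, ∫ τ in (0 : ℝ)..s, k' (s - τ) * u τ := by
        rw [intervalIntegral.integral_add (hut.const_mul _) (hut.continuousOn_mul hkcont),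
          integral_integral_deriv_comp_sub_mul ht.1 hkt hk' hut]
    _ = ∫ s in (0 : ℝ)..t, (k 0 * u s + ∫ τ in (0 : ℝ)..s, k' (s - τ) * u τ) :=
        (intervalIntegral.integral_add (hut.const_mul _) hconv).symm
    _ = ∫ s in (0 : ℝ)..t, f s := by
        refine intervalIntegral.integral_congr fun s hs => hvolterra s ?_
        rw [uIcc_of_le ht.1] at hs
        exact ⟨hs.1, hs.2.trans ht.2⟩

theorem exists_continuous_hasDerivAt_inner_apply {X : Type*} [NormedAddCommGroup X]
    [InnerProductSpace ℂ X] [CompleteSpace X] {S : ℝ → X →L[ℂ] X} {b c c' : X}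
    (hS : ContinuousOn (fun t => S t b) (Ici 0))
    (hc : ∀ s, 0 ≤ s → HasDerivAt (fun t => ContinuousLinearMap.adjoint (S t) c)
      (ContinuousLinearMap.adjoint (S s) c') s) :
    ∃ G : ℝ → ℂ, Continuous G ∧ ∀ s, 0 ≤ s → HasDerivAt (fun t => inner ℂ c (S t b)) (G s) s := by
  -- `S` is only strongly continuous on `[0, ∞)`, so the derivative is frozen at its value at `0`
  -- for negative times.
  refine ⟨fun s => inner ℂ c' (S (max s 0) b), continuous_const.inner
    (hS.comp_continuous (continuous_id.max continuous_const) fun s => le_max_right s 0),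
    fun s hs => ?_⟩
  have h := (hc s hs).inner ℂ (hasDerivAt_const s b)
  simp only [inner_zero_right, zero_add, ContinuousLinearMap.adjoint_inner_left] at h
  simpa only [max_eq_left hs] using h

theorem IntervalIntegrable.sq_norm_add {E : Type*} [NormedAddCommGroup E] {f g : ℝ → E}
    {a b : ℝ} {μ : Measure ℝ} (hf : IntervalIntegrable f μ a b) (hg : IntervalIntegrable g μ a b)
    (hf₂ : IntervalIntegrable (fun x => ‖f x‖ ^ 2) μ a b)
    (hg₂ : IntervalIntegrable (fun x => ‖g x‖ ^ 2) μ a b) :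
    IntervalIntegrable (fun x => ‖f x + g x‖ ^ 2) μ a b := by
  rw [intervalIntegrable_iff] at *
  have hf' := (memLp_two_iff_integrable_sq_norm hf.aestronglyMeasurable).2 hf₂
  have hg' := (memLp_two_iff_integrable_sq_norm hg.aestronglyMeasurable).2 hg₂
  exact (memLp_two_iff_integrable_sq_norm (hf.aestronglyMeasurable.add hg.aestronglyMeasurable)).1
    (hf'.add hg')

theorem stmt_18_general {X₂ : Type*} [NormedAddCommGroup X₂] [InnerProductSpace ℂ X₂]
    [CompleteSpace X₂]
    (S : ℝ → (X₂ →L[ℂ] X₂)) (hS0 : S 0 = 1)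
    (hScont : ∀ x : X₂, ContinuousOn (fun t => S t x) (Set.Ici 0))
    (b₂ c cstar : X₂)
    (hc : ∀ s : ℝ, HasDerivAt (fun u : ℝ => (ContinuousLinearMap.adjoint (S u)) c)
      ((ContinuousLinearMap.adjoint (S s)) cstar) s)
    (hcb : (inner ℂ c b₂ : ℂ) ≠ 0)
    (t₁ : ℝ) (ht₁ : 0 < t₁) (w w' : ℝ → ℂ)
    (hw'int : IntervalIntegrable w' MeasureTheory.volume 0 t₁)
    (hwAC : ∀ t ∈ Set.Icc 0 t₁, w t = ∫ s in (0:ℝ)..t, w' s)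
    (hw'L2 : IntervalIntegrable (fun s => ‖w' s‖ ^ 2) MeasureTheory.volume 0 t₁) :
    ∃ u : ℝ → ℂ,
      IntervalIntegrable u MeasureTheory.volume 0 t₁ ∧
      IntervalIntegrable (fun s => ‖u s‖ ^ 2) MeasureTheory.volume 0 t₁ ∧
      ∀ t ∈ Set.Icc 0 t₁, w t = ∫ τ in (0:ℝ)..t, (inner ℂ c (S (t - τ) b₂) : ℂ) * u τ := by
  obtain ⟨G, hG, hk⟩ := exists_continuous_hasDerivAt_inner_apply (hScont b₂) fun s _ => hc s
  set k₀ : ℂ := inner ℂ c b₂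
  obtain ⟨v, hv, hvolterra⟩ := exists_continuous_volterra_solution (K := fun s => -(k₀⁻¹ * G s))
    (h := fun s => w' s / k₀) ht₁.le (by fun_prop) (hw'int.div_const k₀)
  set u := fun s => w' s / k₀ + v s
  have hu : IntervalIntegrable u volume 0 t₁ :=
    (hw'int.div_const k₀).add (hv.intervalIntegrable _ _)
  refine ⟨u, hu, ?_, fun t ht => ?_⟩
  · exact (hw'int.div_const k₀).sq_norm_add (hv.intervalIntegrable _ _)
      (by simpa [norm_div, div_pow] using hw'L2.div_const (‖k₀‖ ^ 2))
      ((hv.norm.pow 2).intervalIntegrable _ _)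
  rw [hwAC t ht]
  refine (integral_comp_sub_mul_eq_of_volterra (fun s hs => hk s hs.1) hG hu
    (fun s hs => ?_) ht).symm
  have hk₀ : inner ℂ c (S 0 b₂) = k₀ := by simp [hS0, k₀]
  simp only [hk₀, u, hvolterra s hs, neg_mul, mul_assoc, intervalIntegral.integral_neg,
    intervalIntegral.integral_const_mul]
  field_simp
  ring

/-- Exact solvability of the first-kind Volterra equation w(t) = ∫₀ᵗ ⟨c, S(t-τ)b₂⟩ u(τ) dτ
with a square integrable control u, for any w ∈ H¹ with w(0) = 0, provided c ∈ D(A₂*)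
(encoded via cstar = A₂*c and differentiability of the adjoint orbit) and ⟨c,b₂⟩ ≠ 0. -/
theorem stmt_18 {X₂ : Type*} [NormedAddCommGroup X₂] [InnerProductSpace ℂ X₂]
    [CompleteSpace X₂]
    (S : ℝ → (X₂ →L[ℂ] X₂)) (hS0 : S 0 = 1)
    (hSsg : ∀ s t : ℝ, 0 ≤ s → 0 ≤ t → S (s + t) = S s ∘L S t)
    (hScont : ∀ x : X₂, ContinuousOn (fun t => S t x) (Set.Ici 0))
    (b₂ c cstar : X₂)
    (hc : ∀ s : ℝ, HasDerivAt (fun u : ℝ => (ContinuousLinearMap.adjoint (S u)) c)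
      ((ContinuousLinearMap.adjoint (S s)) cstar) s)
    (hcb : (inner ℂ c b₂ : ℂ) ≠ 0)
    (t₁ : ℝ) (ht₁ : 0 < t₁) (w w' : ℝ → ℂ)
    (hw'int : IntervalIntegrable w' MeasureTheory.volume 0 t₁)
    (hwAC : ∀ t ∈ Set.Icc 0 t₁, w t = ∫ s in (0:ℝ)..t, w' s)
    (hw'L2 : IntervalIntegrable (fun s => ‖w' s‖ ^ 2) MeasureTheory.volume 0 t₁) :
    ∃ u : ℝ → ℂ,
      IntervalIntegrable u MeasureTheory.volume 0 t₁ ∧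
      IntervalIntegrable (fun s => ‖u s‖ ^ 2) MeasureTheory.volume 0 t₁ ∧
      ∀ t ∈ Set.Icc 0 t₁, w t = ∫ τ in (0:ℝ)..t, (inner ℂ c (S (t - τ) b₂) : ℂ) * u τ :=
  stmt_18_general S hS0 hScont b₂ c cstar hc hcb t₁ ht₁ w w' hw'int hwAC hw'L2
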